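/- arXiv:1204.1693 — 2 statements merged into one kernel-verified Lean document; each statement's English description precedes it below -/
import Mathlib

section
/- If Φ is an admissible subset of ℕ and m ∈ Φ, then the set mΦ = {m·x : x ∈ Φ} is also an admissible subset of ℕ. -/
/-- A subset `Φ` of `ℕ` containing `0` is admissible if for all `i, j, k ∈ Φ` with
`i + j + k ∈ Φ`, one has `i + j ∈ Φ` iff `j + k ∈ Φ`. -/
def IsAdmissible (Φ : Set ℕ) : Prop :=
  0 ∈ Φ ∧ ∀ i ∈ Φ, ∀ j ∈ Φ, ∀ k ∈ Φ, i + j + k ∈ Φ → (i + j ∈ Φ ↔ j + k ∈ Φ)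

theorem isAdmissible_singleton_zero : IsAdmissible {0} := by
  simp [IsAdmissible]

theorem IsAdmissible.image_of_injective {Φ : Set ℕ} (hΦ : IsAdmissible Φ) {f : ℕ →+ ℕ}
    (hf : Function.Injective f) : IsAdmissible (f '' Φ) := by
  obtain ⟨h0, hadm⟩ := hΦ
  refine ⟨⟨0, h0, map_zero f⟩, ?_⟩
  rintro _ ⟨a, ha, rfl⟩ _ ⟨b, hb, rfl⟩ _ ⟨c, hc, rfl⟩ habc
  simp only [← map_add, hf.mem_set_image] at habc ⊢
  exact hadm a ha b hb c hc habc

theorem admissible_smul_general (Φ : Set ℕ) (hΦ : IsAdmissible Φ) (m : ℕ) :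
    IsAdmissible ((fun x => m * x) '' Φ) := by
  rcases eq_or_ne m 0 with rfl | hm0
  · simpa only [zero_mul, Set.Nonempty.image_const ⟨0, hΦ.1⟩] using isAdmissible_singleton_zero
  · exact hΦ.image_of_injective (f := AddMonoidHom.mulLeft m) (mul_right_injective₀ hm0)

theorem admissible_smul (Φ : Set ℕ) (hΦ : IsAdmissible Φ) (m : ℕ) (hm : m ∈ Φ) :
    IsAdmissible ((fun x => m * x) '' Φ) :=
  admissible_smul_general Φ hΦ m
end

section
/- Let 𝒜 be an abelian category, M an object, and 0 → X →^α M₁ →^β Y → 0 a short exact sequence with M₁ ∈ add(M). Then the set of endomorphisms φ of X ⊕ M whose component X → X admits a lift t₁ : M₁ → M₁ with α ∘ (φ restricted to X → X) = t₁ ∘ α, and whose component X → M factors through α (i.e., equals s ∘ α for some s : M₁ → M), is closed under composition and addition and contains the identity; hence it forms a subring of End_𝒜(X ⊕ M). -/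
open CategoryTheory CategoryTheory.Limits

/-- `N` belongs to `add M`: it is a direct summand of a finite direct sum of copies of `M`. -/
def CatMemAdd {𝒜 : Type*} [Category 𝒜] [Preadditive 𝒜] [HasFiniteBiproducts 𝒜]
    (M N : 𝒜) : Prop :=
  ∃ (n : ℕ) (i : N ⟶ ⨁ fun _ : Fin n => M) (p : (⨁ fun _ : Fin n => M) ⟶ N),
    i ≫ p = 𝟙 N

namespace CategoryTheory

variable {C : Type*} [Category C] [Preadditive C]

lemma biprod.comp_eq_fst_inl_add_snd_inr {W X M Z : C} [HasBinaryBiproduct X M]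
    (f : W ⟶ X ⊞ M) (g : X ⊞ M ⟶ Z) :
    f ≫ g = (f ≫ biprod.fst) ≫ biprod.inl ≫ g + (f ≫ biprod.snd) ≫ biprod.inr ≫ g := by
  conv_lhs => rw [← Category.id_comp g, ← biprod.total]
  simp only [Preadditive.add_comp, Preadditive.comp_add, Category.assoc]

lemma biprod.inl_comp_mul_comp {X M Z : C} [HasBinaryBiproduct X M]
    (φ ψ : End (X ⊞ M)) (g : X ⊞ M ⟶ Z) :
    biprod.inl ≫ (φ * ψ) ≫ g =
      (biprod.inl ≫ ψ ≫ biprod.fst) ≫ biprod.inl ≫ φ ≫ g +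
        (biprod.inl ≫ ψ ≫ biprod.snd) ≫ biprod.inr ≫ φ ≫ g := by
  rw [End.mul_def, Category.assoc, ← Category.assoc biprod.inl,
    biprod.comp_eq_fst_inl_add_snd_inr]
  simp only [Category.assoc]

variable {X M₁ : C} (α : X ⟶ M₁) (M : C) [HasBinaryBiproduct X M]

def liftableEnd : Subring (End (X ⊞ M)) where
  carrier := {φ | (∃ t₁ : M₁ ⟶ M₁, (biprod.inl ≫ φ ≫ biprod.fst) ≫ α = α ≫ t₁) ∧
    ∃ s : M₁ ⟶ M, biprod.inl ≫ φ ≫ biprod.snd = α ≫ s}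
  one_mem' := ⟨⟨𝟙 M₁, by simp⟩, 0, by simp⟩
  zero_mem' := ⟨⟨0, by simp⟩, 0, by simp⟩
  add_mem' := by
    rintro φ ψ ⟨⟨t, ht⟩, s, hs⟩ ⟨⟨t', ht'⟩, s', hs'⟩
    refine ⟨⟨t + t', ?_⟩, s + s', ?_⟩
    · rw [Preadditive.add_comp, Preadditive.comp_add, Preadditive.add_comp, ht, ht',
        Preadditive.comp_add]
    · rw [Preadditive.add_comp, Preadditive.comp_add, hs, hs', Preadditive.comp_add]
  neg_mem' := by
    rintro φ ⟨⟨t, ht⟩, s, hs⟩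
    refine ⟨⟨-t, ?_⟩, -s, ?_⟩
    · rw [Preadditive.neg_comp, Preadditive.comp_neg, Preadditive.neg_comp, ht,
        Preadditive.comp_neg]
    · rw [Preadditive.neg_comp, Preadditive.comp_neg, hs, Preadditive.comp_neg]
  mul_mem' := by
    -- `inr ≫ φ` enters `inl ≫ (φ * ψ)` only through `ψ`'s component `X ⟶ M`, which is `α ≫ s'`.
    rintro φ ψ ⟨⟨t, ht⟩, s, hs⟩ ⟨⟨t', ht'⟩, s', hs'⟩
    simp only [Category.assoc] at ht ht'
    refine ⟨⟨t' ≫ t + s' ≫ biprod.inr ≫ φ ≫ biprod.fst ≫ α, ?_⟩,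
      t' ≫ s + s' ≫ biprod.inr ≫ φ ≫ biprod.snd, ?_⟩ <;>
    simp only [Category.assoc, biprod.inl_comp_mul_comp, ht, hs, reassoc_of% ht',
      reassoc_of% hs', Preadditive.comp_add, Preadditive.add_comp]

end CategoryTheory

theorem hat_endomorphisms_subring_general {𝒜 : Type*} [Category 𝒜] [Abelian 𝒜]
    [HasFiniteBiproducts 𝒜] {X M₁ M : 𝒜}
    (α : X ⟶ M₁) :
    ∃ S : Subring (End (X ⊞ M)),
      (S : Set (End (X ⊞ M))) =
        {φ : End (X ⊞ M) |
          (∃ t₁ : M₁ ⟶ M₁, (biprod.inl ≫ φ ≫ biprod.fst) ≫ α = α ≫ t₁) ∧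
          ∃ s : M₁ ⟶ M, biprod.inl ≫ φ ≫ biprod.snd = α ≫ s} :=
  ⟨liftableEnd α M, rfl⟩

/-- Let `0 → X →^α M₁ →^β Y → 0` be a short exact sequence in an abelian category with
`M₁ ∈ add M`. The set of endomorphisms `φ` of `X ⊕ M` whose `(X,X)`-component `t`
admits a lift `t₁ : M₁ → M₁` with `t ≫ α = α ≫ t₁` and whose `(X,M)`-component factors
through `α` is a subring of `End (X ⊞ M)` (contains the identity, closed under
addition, negation and composition). -/
theorem hat_endomorphisms_subring {𝒜 : Type*} [Category 𝒜] [Abelian 𝒜]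
    [HasFiniteBiproducts 𝒜] {X M₁ Y M : 𝒜}
    (α : X ⟶ M₁) (β : M₁ ⟶ Y) (w : α ≫ β = 0)
    (h : (ShortComplex.mk α β w).ShortExact) (hM₁ : CatMemAdd M M₁) :
    ∃ S : Subring (End (X ⊞ M)),
      (S : Set (End (X ⊞ M))) =
        {φ : End (X ⊞ M) |
          (∃ t₁ : M₁ ⟶ M₁, (biprod.inl ≫ φ ≫ biprod.fst) ≫ α = α ≫ t₁) ∧
          ∃ s : M₁ ⟶ M, biprod.inl ≫ φ ≫ biprod.snd = α ≫ s} :=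
  hat_endomorphisms_subring_general α
end
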